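/- Let b ∈ R with b > 2, c = sqrt(b-2), d = sqrt(b+2), and x(u,v) = ((cosh cu)/c, (sinh cu)/c, (cos dv)/d, (sin dv)/d, b/(cd)). Then the first fundamental form coefficients are E = ⟨x_u,x_u⟩ = -sinh^2(cu) + cosh^2(cu) = 1, F = 0, G = 1, and the mean curvature vector H = (1/2)(x_uu + x_vv) + x satisfies ⟨H, H⟩ = 0 with H ≠ 0; that is, the surface is flat, space-like, and quasi-minimal in S^4_1(1). -/

import Mathlib

/-!
With `c = √(b - 2)` and `d = √(b + 2)` the two coordinate curves decouple: `x_uu` is `c²` times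
the hyperbolic part `(x₀, x₁, 0, 0, 0)` and `x_vv` is `-d²` times the circular part
`(0, 0, x₂, x₃, 0)`. Hence `H = (b/2) (x₀, x₁, -x₂, -x₃, 0) + (0, 0, 0, 0, x₄)`, and
`⟨H, H⟩ = (b²/4) (1/d² - 1/c²) + b²/(c²d²)` vanishes because `d² - c² = 4`, while the last
coordinate `b/(cd)` of `H` never does.
-/

open Real

/-- The indefinite inner product of the Minkowski space `E⁵₁`. -/
noncomputable def mink (x y : Fin 5 → ℝ) : ℝ :=
  -(x 0 * y 0) + x 1 * y 1 + x 2 * y 2 + x 3 * y 3 + x 4 * y 4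

/-- The surface (iv): `x(u,v) = ((cosh cu)/c, (sinh cu)/c, (cos dv)/d, (sin dv)/d, b/(cd))`,
where `c = √(b-2)`, `d = √(b+2)`. -/
noncomputable def surf (b u v : ℝ) : Fin 5 → ℝ :=
  let c := Real.sqrt (b - 2)
  let d := Real.sqrt (b + 2)
  ![Real.cosh (c * u) / c, Real.sinh (c * u) / c,
    Real.cos (d * v) / d, Real.sin (d * v) / d, b / (c * d)]

/-- Partial derivative with respect to `u`. -/
noncomputable def surfU (b u v : ℝ) : Fin 5 → ℝ := fun i => deriv (fun t => surf b t v i) u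

/-- Partial derivative with respect to `v`. -/
noncomputable def surfV (b u v : ℝ) : Fin 5 → ℝ := fun i => deriv (fun t => surf b u t i) v

/-- Second partial derivative with respect to `u`. -/
noncomputable def surfUU (b u v : ℝ) : Fin 5 → ℝ :=
  fun i => deriv (fun t => deriv (fun s => surf b s v i) t) u

/-- Second partial derivative with respect to `v`. -/
noncomputable def surfVV (b u v : ℝ) : Fin 5 → ℝ :=
  fun i => deriv (fun t => deriv (fun s => surf b u s i) t) v

/-- The mean curvature vector of the surface in `S⁴₁(1)`: `H = (1/2)(x_uu + x_vv) + x`. -/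
noncomputable def meanCurv (b u v : ℝ) : Fin 5 → ℝ :=
  fun i => (1 / 2) * (surfUU b u v i + surfVV b u v i) + surf b u v i

variable {b : ℝ}

lemma surfU_eq (hb : 2 < b) (u v : ℝ) :
    surfU b u v = ![sinh (√(b - 2) * u), cosh (√(b - 2) * u), 0, 0, 0] := by
  have hc : √(b - 2) ≠ 0 := (sqrt_pos.2 (by linarith)).ne'
  ext i; fin_cases i <;> simp [surfU, surf, deriv_comp_mul_left, hc]

lemma surfV_eq (hb : -2 < b) (u v : ℝ) :
    surfV b u v = ![0, 0, -sin (√(b + 2) * v), cos (√(b + 2) * v), 0] := by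
  have hd : √(b + 2) ≠ 0 := (sqrt_pos.2 (by linarith)).ne'
  ext i; fin_cases i <;> simp [surfV, surf, deriv_comp_mul_left, neg_div, hd]

lemma surfUU_eq (hb : 2 < b) (u v : ℝ) :
    surfUU b u v = ![√(b - 2) * cosh (√(b - 2) * u), √(b - 2) * sinh (√(b - 2) * u), 0, 0, 0] := by
  have hc : √(b - 2) ≠ 0 := (sqrt_pos.2 (by linarith)).ne'
  ext i; fin_cases i <;> simp [surfUU, surf, deriv_comp_mul_left, hc]

lemma surfVV_eq (hb : -2 < b) (u v : ℝ) :
    surfVV b u v =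
      ![0, 0, -(√(b + 2) * cos (√(b + 2) * v)), -(√(b + 2) * sin (√(b + 2) * v)), 0] := by
  have hd : √(b + 2) ≠ 0 := (sqrt_pos.2 (by linarith)).ne'
  ext i; fin_cases i <;> simp [surfVV, surf, deriv_comp_mul_left, neg_div, hd]

lemma meanCurv_eq (hb : 2 < b) (u v : ℝ) :
    meanCurv b u v = ![b * cosh (√(b - 2) * u) / (2 * √(b - 2)),
      b * sinh (√(b - 2) * u) / (2 * √(b - 2)), -(b * cos (√(b + 2) * v) / (2 * √(b + 2))),
      -(b * sin (√(b + 2) * v) / (2 * √(b + 2))), b / (√(b - 2) * √(b + 2))] := by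
  have hc : 0 < √(b - 2) := sqrt_pos.2 (by linarith)
  have hd : 0 < √(b + 2) := sqrt_pos.2 (by linarith)
  have hc2 : √(b - 2) ^ 2 = b - 2 := sq_sqrt (by linarith)
  have hd2 : √(b + 2) ^ 2 = b + 2 := sq_sqrt (by linarith)
  ext i
  fin_cases i <;>
    simp only [meanCurv, surf, surfUU_eq hb, surfVV_eq (by linarith : -2 < b), Fin.reduceFinMk,
      Fin.zero_eta, Fin.mk_one, Matrix.cons_val] <;>
    field_simp
  · linear_combination cosh (√(b - 2) * u) * hc2
  · linear_combination sinh (√(b - 2) * u) * hc2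
  · linear_combination -cos (√(b + 2) * v) * hd2
  · linear_combination -sin (√(b + 2) * v) * hd2
  · ring

lemma mink_vec (x₀ x₁ x₂ x₃ x₄ y₀ y₁ y₂ y₃ y₄ : ℝ) :
    mink ![x₀, x₁, x₂, x₃, x₄] ![y₀, y₁, y₂, y₃, y₄] =
      -(x₀ * y₀) + x₁ * y₁ + x₂ * y₂ + x₃ * y₃ + x₄ * y₄ := rfl

lemma mink_surfU_self (hb : 2 < b) (u v : ℝ) : mink (surfU b u v) (surfU b u v) = 1 := by
  rw [surfU_eq hb, mink_vec]
  linear_combination cosh_sq_sub_sinh_sq (√(b - 2) * u)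

lemma mink_surfU_surfV (hb : 2 < b) (u v : ℝ) : mink (surfU b u v) (surfV b u v) = 0 := by
  rw [surfU_eq hb, surfV_eq (by linarith), mink_vec]
  ring

lemma mink_surfV_self (hb : -2 < b) (u v : ℝ) : mink (surfV b u v) (surfV b u v) = 1 := by
  rw [surfV_eq hb, mink_vec]
  linear_combination sin_sq_add_cos_sq (√(b + 2) * v)

lemma mink_meanCurv_self (hb : 2 < b) (u v : ℝ) : mink (meanCurv b u v) (meanCurv b u v) = 0 := by
  have hc : 0 < √(b - 2) := sqrt_pos.2 (by linarith)
  have hd : 0 < √(b + 2) := sqrt_pos.2 (by linarith)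
  have hc2 : √(b - 2) ^ 2 = b - 2 := sq_sqrt (by linarith)
  have hd2 : √(b + 2) ^ 2 = b + 2 := sq_sqrt (by linarith)
  rw [meanCurv_eq hb, mink_vec]
  field_simp
  linear_combination -(b ^ 2 * √(b + 2) ^ 2) * cosh_sq_sub_sinh_sq (√(b - 2) * u)
    + b ^ 2 * √(b - 2) ^ 2 * sin_sq_add_cos_sq (√(b + 2) * v) + b ^ 2 * hc2 - b ^ 2 * hd2

lemma meanCurv_ne_zero (hb : 2 < b) (u v : ℝ) : meanCurv b u v ≠ 0 := by
  have hc : 0 < √(b - 2) := sqrt_pos.2 (by linarith)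
  have hd : 0 < √(b + 2) := sqrt_pos.2 (by linarith)
  rw [meanCurv_eq hb]
  exact fun h => (div_pos (by linarith) (mul_pos hc hd)).ne' (congrFun h 4)

/-- For `b > 2`, `c = √(b-2)`, `d = √(b+2)`, the surface
`x(u,v) = ((cosh cu)/c, (sinh cu)/c, (cos dv)/d, (sin dv)/d, b/(cd))` has first fundamental
form coefficients `E = 1`, `F = 0`, `G = 1`, and the mean curvature vector
`H = (1/2)(x_uu + x_vv) + x` satisfies `⟨H,H⟩ = 0` with `H ≠ 0`; that is, the surface is
flat, space-like, and quasi-minimal in `S⁴₁(1)`. -/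
theorem surface_iv_quasiMinimal (b : ℝ) (hb : 2 < b) :
    ∀ u v : ℝ,
      mink (surfU b u v) (surfU b u v) = 1 ∧
      mink (surfU b u v) (surfV b u v) = 0 ∧
      mink (surfV b u v) (surfV b u v) = 1 ∧
      mink (meanCurv b u v) (meanCurv b u v) = 0 ∧
      meanCurv b u v ≠ 0 := fun u v =>
  ⟨mink_surfU_self hb u v, mink_surfU_surfV hb u v, mink_surfV_self (by linarith) u v,
    mink_meanCurv_self hb u v, meanCurv_ne_zero hb u v⟩
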